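/- Let (r₀, m₀, ρ₀) be a small-hard-star background in comoving coordinates on [0,B], with ψ₀ = −(1/2)·ln(2ρ₀ − 1), so that ∂_χψ₀ = ((m₀/r₀² + 4πr₀(ρ₀−1))/(1 − 2m₀/r₀))·∂_χ r₀. Suppose C² functions r₁, ρ₁, ψ₁, ω₁, m₁ of (φ,χ) ∈ ℝ × [0,B] satisfy the linearised equations: (i) ρ₁ = −(2ρ₀−1)ψ₁; (ii) (2/r₀)·r₁ − ψ₁ + ω₁ = 0; (iii) m₁ = −4πr₀²(ρ₀−1)·r₁; (iv) −m₁/r₀ + (m₀/r₀²)·r₁ = −(1 − 2m₀/r₀)·ω₁ + (1 − 2m₀/r₀)·(∂_χ r₁)/(∂_χ r₀); (v) (2ρ₀−1)·∂²_φ r₁ + (2ω₁ − (∂_χψ₁)/(∂_χψ₀) − (∂_χ r₁)/(∂_χ r₀))·(m₀/r₀² + 4πr₀(ρ₀−1)) = −m₁/r₀² + 2(m₀/r₀³)·r₁ − 4π(ρ₀−1)·r₁ − 4πr₀·ρ₁. Then: ψ₁ = (2/r₀ − (∂_χψ₀)/(∂_χ r₀))·r₁ + (∂_χ r₁)/(∂_χ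 r₀), ω₁ = (∂_χ r₁)/(∂_χ r₀) − ((∂_χψ₀)/(∂_χ r₀))·r₁, and r₁ satisfies the decoupled master wave equation: (2ρ₀−1)·∂²_φ r₁ − (m₀/r₀² + 4πr₀(ρ₀−1))·(1/∂_χψ₀)·∂_χ((∂_χ r₁)/(∂_χ r₀)) = [2·((∂_χψ₀)/(∂_χ r₀))·(m₀/r₀² + 4πr₀(ρ₀−1)) + 2m₀/r₀³ + 4πr₀(2ρ₀−1)·(2/r₀ − (∂_χψ₀)/(∂_χ r₀))]·r₁ + (m₀/r₀² + 4πr₀(ρ₀−1))·(1/∂_χψ₀)·∂_χ[(2/r₀ − (∂_χψ₀)/(∂_χ r₀))·r₁] + (4πr₀ρ₀ − m₀/r₀²)·(∂_χ r₁)/(∂_χ r₀). -/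

import Mathlib

/-!
Once the background is known to be non-degenerate in the interior, the theorem is algebra:
by (iii) the left side of (iv) is `(m₀/r₀² + 4πr₀(ρ₀−1)) r₁`, so (iv) can be solved for `ω₁`,
(ii) then gives `ψ₁`, and substituting both (and the χ-derivative of the formula for `ψ₁`)
into (v) yields the master equation.

Non-degeneracy means `0 < r₀ < R` on `(0,B)` and `r − 2m(r) > 0` on `(0,R]`, which make `g` and
`∂_χψ₀` positive and differentiable.
* `r − 2m(r) > 0`: at a first zero `s`, `r − 2m(r) ≤ L(s − r)` by the mass equation, so the density
  equation gives `ρ' ≤ −δ/(L(s − r))` and `ρ` would fall below `1` like `(δ/L) log (s − r)`.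
* `r₀ > 0`: at the last zero `χ₀` of `r₀` we have `∂_χ r₀ = g(0) = 0` (`gfun m ρ 0 = 0` since `x / 0 = 0`),
  whereas `∂_χ(r₀³) = 3r₀²g(r₀)` is bounded below by a positive constant while `r₀` is small.
-/

open Real Set Filter

noncomputable section

/-- `f` is C¹ on `s`. -/
def C1On (f : ℝ → ℝ) (s : Set ℝ) : Prop :=
  (∀ x ∈ s, DifferentiableAt ℝ f x) ∧ ContinuousOn (deriv f) s

/-- A small hard star of radius `R` with smallness constant `C`
(units `G = c = ρ₀ = 1`). -/
def IsSmallStar (C R : ℝ) (m ρ : ℝ → ℝ) : Prop :=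
  0 < R ∧ ContinuousOn m (Icc 0 R) ∧ ContinuousOn ρ (Icc 0 R) ∧
  m 0 = 0 ∧ ρ R = 1 ∧
  (∀ r ∈ Ioo (0:ℝ) R,
    HasDerivAt m (4 * π * r ^ 2 * ρ r) r ∧
    HasDerivAt ρ (-((2 * ρ r - 1) / (r - 2 * m r)) *
      (m r / r + 4 * π * r ^ 2 * (ρ r - 1))) r) ∧
  (∀ r ∈ Ioc (0:ℝ) R,
    1 ≤ ρ r ∧ ρ r ≤ 1 + C * R ^ 2 ∧
    1 ≤ 3 / (4 * π) * (m r / r ^ 3) ∧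
    3 / (4 * π) * (m r / r ^ 3) ≤ 1 + C * R ^ 2)

/-- The comoving derivative `dr/dχ = g(r) = √(1 − 2m(r)/r)/(4πr²√(2ρ(r)−1))`. -/
def gfun (m ρ : ℝ → ℝ) (r : ℝ) : ℝ :=
  Real.sqrt (1 - 2 * m r / r) / (4 * π * r ^ 2 * Real.sqrt (2 * ρ r - 1))

/-- Comoving coordinates: `r₀ : [0,B] → [0,R]` solves `∂_χ r₀ = g(r₀)`,
`r₀(0) = 0`, `r₀(B) = R`. -/
def IsComoving (R B : ℝ) (m ρ r₀ : ℝ → ℝ) : Prop :=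
  0 < B ∧ r₀ 0 = 0 ∧ r₀ B = R ∧ ContinuousOn r₀ (Icc 0 B) ∧
  (∀ χ ∈ Icc (0:ℝ) B, r₀ χ ∈ Icc 0 R) ∧
  ∀ χ ∈ Ioc (0:ℝ) B, HasDerivAt r₀ (gfun m ρ (r₀ χ)) χ

/-- Partial derivative in the comoving spatial coordinate `χ`. -/
def Dchi (f : ℝ → ℝ → ℝ) : ℝ → ℝ → ℝ := fun φ χ => deriv (f φ) χ

/-- Partial derivative in the comoving time coordinate `φ`. -/
def Dphi (f : ℝ → ℝ → ℝ) : ℝ → ℝ → ℝ := fun φ χ => deriv (fun t => f t χ) φ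

/-- `∂_χψ₀ = ((m₀/r₀² + 4πr₀(ρ₀−1))/(1 − 2m₀/r₀))·∂_χ r₀` for
`ψ₀ = −(1/2)ln(2ρ₀−1)`. -/
def dpsi0 (m ρ r₀ : ℝ → ℝ) (χ : ℝ) : ℝ :=
  (m (r₀ χ) / r₀ χ ^ 2 + 4 * π * r₀ χ * (ρ (r₀ χ) - 1)) /
    (1 - 2 * m (r₀ χ) / r₀ χ) * gfun m ρ (r₀ χ)

/-- The decoupled master wave equation for the linearised radius `r₁` at `(φ,χ)`. -/
def MasterEq (m ρ r₀ : ℝ → ℝ) (r₁ : ℝ → ℝ → ℝ) (φ χ : ℝ) : Prop :=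
  (2 * ρ (r₀ χ) - 1) * Dphi (Dphi r₁) φ χ
    - (m (r₀ χ) / r₀ χ ^ 2 + 4 * π * r₀ χ * (ρ (r₀ χ) - 1)) * (1 / dpsi0 m ρ r₀ χ) *
      deriv (fun x => Dchi r₁ φ x / gfun m ρ (r₀ x)) χ
  = (2 * (dpsi0 m ρ r₀ χ / gfun m ρ (r₀ χ)) *
        (m (r₀ χ) / r₀ χ ^ 2 + 4 * π * r₀ χ * (ρ (r₀ χ) - 1))
      + 2 * m (r₀ χ) / r₀ χ ^ 3
      + 4 * π * r₀ χ * (2 * ρ (r₀ χ) - 1) *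
        (2 / r₀ χ - dpsi0 m ρ r₀ χ / gfun m ρ (r₀ χ))) * r₁ φ χ
    + (m (r₀ χ) / r₀ χ ^ 2 + 4 * π * r₀ χ * (ρ (r₀ χ) - 1)) * (1 / dpsi0 m ρ r₀ χ) *
      deriv (fun x => (2 / r₀ x - dpsi0 m ρ r₀ x / gfun m ρ (r₀ x)) * r₁ φ x) χ
    + (4 * π * r₀ χ * ρ (r₀ χ) - m (r₀ χ) / r₀ χ ^ 2) *
      (Dchi r₁ φ χ / gfun m ρ (r₀ χ))

open Topology

lemma gfun_nonneg (m ρ : ℝ → ℝ) (r : ℝ) : 0 ≤ gfun m ρ r :=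
  div_nonneg (sqrt_nonneg _) (by have := pi_pos; positivity)

namespace IsSmallStar

variable {C R : ℝ} {m ρ : ℝ → ℝ}

lemma hasDerivAt_mass (h : IsSmallStar C R m ρ) {r : ℝ} (hr : r ∈ Ioo 0 R) :
    HasDerivAt m (4 * π * r ^ 2 * ρ r) r :=
  (h.2.2.2.2.2.1 r hr).1

lemma hasDerivAt_density (h : IsSmallStar C R m ρ) {r : ℝ} (hr : r ∈ Ioo 0 R) :
    HasDerivAt ρ (-((2 * ρ r - 1) / (r - 2 * m r)) * (m r / r + 4 * π * r ^ 2 * (ρ r - 1))) r :=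
  (h.2.2.2.2.2.1 r hr).2

lemma one_le_density (h : IsSmallStar C R m ρ) {r : ℝ} (hr : r ∈ Ioc 0 R) : 1 ≤ ρ r :=
  (h.2.2.2.2.2.2 r hr).1

lemma one_le_one_add (h : IsSmallStar C R m ρ) : 1 ≤ 1 + C * R ^ 2 := by
  obtain ⟨hR, -, -, -, hρR, -, hbd⟩ := h
  simpa [hρR] using (hbd R ⟨hR, le_rfl⟩).2.1

lemma le_mass (h : IsSmallStar C R m ρ) {r : ℝ} (hr : r ∈ Ioc 0 R) :
    4 * π / 3 * r ^ 3 ≤ m r := by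
  have hbd := (h.2.2.2.2.2.2 r hr).2.2.1
  rw [div_mul_eq_mul_div, one_le_div (by positivity)] at hbd
  rw [← le_div_iff₀ (pow_pos hr.1 3)]
  linarith

lemma mass_le (h : IsSmallStar C R m ρ) {r : ℝ} (hr : r ∈ Ioc 0 R) :
    m r ≤ 4 * π / 3 * (1 + C * R ^ 2) * r ^ 3 := by
  have hbd := (h.2.2.2.2.2.2 r hr).2.2.2
  rw [div_mul_eq_mul_div, div_le_iff₀ (by positivity)] at hbd
  rw [← div_le_iff₀ (pow_pos hr.1 3)]
  linarith

lemma half_le_one_sub_two_mul_div (h : IsSmallStar C R m ρ) {r : ℝ} (hr : r ∈ Ioc 0 R)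
    (hsmall : 16 * π * (1 + C * R ^ 2) * r ^ 2 ≤ 3) : 1 / 2 ≤ 1 - 2 * m r / r := by
  have hm := h.mass_le hr
  have : 2 * m r / r ≤ 1 / 2 := by
    rw [div_le_iff₀ hr.1]
    nlinarith [hr.1]
  linarith

lemma monotoneOn_sub_two_mul_add (h : IsSmallStar C R m ρ) :
    MonotoneOn (fun r => r - 2 * m r + 8 * π * R ^ 2 * (1 + C * R ^ 2) * r) (Icc 0 R) := by
  have hmc := h.2.1
  refine monotoneOn_of_hasDerivWithinAt_nonneg (convex_Icc 0 R)
    (f' := fun r => 1 - 2 * (4 * π * r ^ 2 * ρ r) + 8 * π * R ^ 2 * (1 + C * R ^ 2) * 1)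
    (by fun_prop) (fun x hx => ?_) (fun x hx => ?_) <;> rw [interior_Icc] at hx
  · exact (((hasDerivAt_id x).sub ((h.hasDerivAt_mass hx).const_mul 2)).add
      ((hasDerivAt_id x).const_mul _)).hasDerivWithinAt
  · obtain ⟨hρ1, hρC, -⟩ := h.2.2.2.2.2.2 x (Ioo_subset_Ioc_self hx)
    have : x ^ 2 * ρ x ≤ R ^ 2 * (1 + C * R ^ 2) :=
      mul_le_mul (pow_le_pow_left₀ hx.1.le hx.2.le 2) hρC (by linarith) (by positivity)
    nlinarith [pi_pos]

lemma antitoneOn_sub_mul_log (h : IsSmallStar C R m ρ) {a b s δ L : ℝ} (ha : 0 < a)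
    (hbs : b < s) (hsR : s ≤ R) (hδ : 0 ≤ δ) (hL : 0 < L)
    (hw : ∀ x ∈ Ioo a b, 0 < x - 2 * m x ∧ x - 2 * m x ≤ L * (s - x))
    (hK : ∀ x ∈ Ioo a b, δ ≤ m x / x + 4 * π * x ^ 2 * (ρ x - 1)) :
    AntitoneOn (fun x => ρ x - δ / L * log (s - x)) (Icc a b) := by
  have hρc : ContinuousOn ρ (Icc a b) := h.2.2.1.mono (Icc_subset_Icc ha.le (by linarith))
  have hlog : ContinuousOn (fun x => log (s - x)) (Icc a b) :=
    ContinuousOn.log (by fun_prop) fun x hx => (sub_pos.2 (hx.2.trans_lt hbs)).ne'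
  refine antitoneOn_of_hasDerivWithinAt_nonpos (convex_Icc a b)
    (f' := fun x => -((2 * ρ x - 1) / (x - 2 * m x)) * (m x / x + 4 * π * x ^ 2 * (ρ x - 1))
      - δ / L * (-1 / (s - x)))
    (hρc.sub (continuousOn_const.mul hlog)) (fun x hx => ?_) (fun x hx => ?_)
    <;> rw [interior_Icc] at hx
  · have hxR : x ∈ Ioo 0 R := ⟨ha.trans hx.1, by linarith [hx.2]⟩
    have hlog := ((hasDerivAt_id x).const_sub s).log (sub_pos.2 (hx.2.trans hbs)).ne'
    exact ((h.hasDerivAt_density hxR).sub (hlog.const_mul (δ / L))).hasDerivWithinAt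
  · obtain ⟨hw0, hwL⟩ := hw x hx
    have hρ1 := h.one_le_density ⟨ha.trans hx.1, by linarith [hx.2]⟩
    have hsx : 0 < s - x := by linarith [hx.2]
    have hKx := hK x hx
    have h1 : -((2 * ρ x - 1) / (x - 2 * m x)) * (m x / x + 4 * π * x ^ 2 * (ρ x - 1))
        ≤ -(δ / (x - 2 * m x)) := by
      rw [neg_mul, neg_le_neg_iff, div_mul_eq_mul_div, div_le_div_iff_of_pos_right hw0]
      nlinarith
    have h2 : δ / (L * (s - x)) ≤ δ / (x - 2 * m x) := by gcongr
    have h3 : δ / L * (-1 / (s - x)) = -(δ / (L * (s - x))) := by field_simp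
    linarith

lemma exists_first_horizon (h : IsSmallStar C R m ρ) {r : ℝ} (hr : r ∈ Ioc 0 R)
    (hneg : r - 2 * m r ≤ 0) :
    ∃ s ∈ Ioc 0 R, s - 2 * m s ≤ 0 ∧ ∀ x ∈ Ioo 0 s, 0 < x - 2 * m x := by
  set k := 16 * π * (1 + C * R ^ 2)
  have hsmall : ∀ x ∈ Ioc 0 R, k * x ^ 2 ≤ 3 → 0 < x - 2 * m x := fun x hx hkx => by
    have := h.half_le_one_sub_two_mul_div hx hkx
    rw [le_sub_iff_add_le, ← le_sub_iff_add_le', div_le_iff₀ hx.1] at this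
    linarith [hx.1]
  -- `0` itself is a zero of `r - 2 m r`, so the search is restricted to `k r² ≥ 3`
  set S := Icc 0 R ∩ (fun x => x - 2 * m x) ⁻¹' Iic 0 ∩ (fun x => k * x ^ 2) ⁻¹' Ici 3
  have hS : IsCompact S := by
    refine isCompact_Icc.of_isClosed_subset ?_ (inter_subset_left.trans inter_subset_left)
    have hw : ContinuousOn (fun x => x - 2 * m x) (Icc 0 R) := by have := h.2.1; fun_prop
    exact (hw.preimage_isClosed_of_isClosed isClosed_Icc isClosed_Iic).inter
      (isClosed_Ici.preimage (by fun_prop))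
  have hrS : r ∈ S := ⟨⟨Ioc_subset_Icc_self hr, hneg⟩,
    le_of_not_ge fun hkr => (hsmall r hr hkr).not_ge hneg⟩
  obtain ⟨s, ⟨⟨hs, hws⟩, hks⟩, hleast⟩ := hS.exists_isLeast ⟨r, hrS⟩
  have hs0 : 0 < s := hs.1.lt_of_ne (by rintro rfl; norm_num at hks)
  refine ⟨s, ⟨hs0, hs.2⟩, hws, fun x hx => ?_⟩
  by_contra! hwx
  by_cases hkx : k * x ^ 2 ≤ 3
  · exact (hsmall x ⟨hx.1, hx.2.le.trans hs.2⟩ hkx).not_ge hwx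
  · exact (hleast ⟨⟨⟨hx.1.le, hx.2.le.trans hs.2⟩, hwx⟩, le_of_not_ge hkx⟩).not_gt hx.2

lemma false_of_first_horizon (h : IsSmallStar C R m ρ) {s : ℝ} (hs : s ∈ Ioc 0 R)
    (hws : s - 2 * m s ≤ 0) (hpos : ∀ x ∈ Ioo 0 s, 0 < x - 2 * m x) : False := by
  set L := 8 * π * R ^ 2 * (1 + C * R ^ 2)
  have hL : 0 < L := by have := h.one_le_one_add; have := h.1; positivity
  set δ := 4 * π / 3 * (s / 2) ^ 2
  have hδ : 0 < δ := by have := hs.1; positivity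
  have hsR : Icc 0 s ⊆ Icc 0 R := Icc_subset_Icc le_rfl hs.2
  have hwL : ∀ x ∈ Icc 0 s, x - 2 * m x ≤ L * (s - x) := fun x hx => by
    have := h.monotoneOn_sub_two_mul_add (hsR hx) (hsR (right_mem_Icc.2 hs.1.le)) hx.2
    simp only at this
    linarith
  have hK : ∀ x ∈ Ioo (s / 2) s, δ ≤ m x / x + 4 * π * x ^ 2 * (ρ x - 1) := fun x hx => by
    have hx0 : 0 < x := by linarith [hx.1, hs.1]
    have hxR : x ∈ Ioc 0 R := ⟨hx0, hx.2.le.trans hs.2⟩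
    have hm : 4 * π / 3 * x ^ 2 ≤ m x / x := by
      rw [le_div_iff₀ hx0]; linarith [h.le_mass hxR]
    have : δ ≤ 4 * π / 3 * x ^ 2 := by
      show 4 * π / 3 * (s / 2) ^ 2 ≤ _
      gcongr
      · linarith [hs.1]
      · exact hx.1.le
    nlinarith [h.one_le_density hxR, pi_pos, sq_nonneg x]
  set A := ρ (s / 2) - δ / L * log (s - s / 2)
  have hbound : ∀ t ∈ Ioo 0 (s / 2), 1 - δ / L * log t ≤ A := fun t ht => by
    have hb : s / 2 ≤ s - t := by linarith [ht.2]
    have := h.antitoneOn_sub_mul_log (half_pos hs.1) (sub_lt_self s ht.1) hs.2 hδ.le hL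
      (fun x hx => ⟨hpos x ⟨by linarith [hx.1, hs.1], by linarith [hx.2, ht.1]⟩,
        hwL x ⟨by linarith [hx.1, hs.1], by linarith [hx.2, ht.1]⟩⟩)
      (fun x hx => hK x ⟨hx.1, by linarith [hx.2, ht.1]⟩)
      (left_mem_Icc.2 hb) (right_mem_Icc.2 hb) hb
    simp only [sub_sub_cancel] at this
    linarith [h.one_le_density (r := s - t) ⟨by linarith [ht.2, hs.1], by linarith [hs.2, ht.1]⟩]
  obtain ⟨t, hlog, ht⟩ := ((tendsto_log_nhdsGT_zero.eventually
    (eventually_lt_atBot ((1 - A) / (δ / L)))).and (Ioo_mem_nhdsGT (half_pos hs.1))).exists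
  have := (lt_div_iff₀' (by positivity)).1 hlog
  linarith [hbound t ht]

lemma sub_two_mul_pos (h : IsSmallStar C R m ρ) {r : ℝ} (hr : r ∈ Ioc 0 R) :
    0 < r - 2 * m r := by
  by_contra! hneg
  obtain ⟨s, hs, hws, hpos⟩ := h.exists_first_horizon hr hneg
  exact h.false_of_first_horizon hs hws hpos

lemma one_sub_two_mul_div_pos (h : IsSmallStar C R m ρ) {r : ℝ} (hr : r ∈ Ioc 0 R) :
    0 < 1 - 2 * m r / r := by
  rw [sub_pos, div_lt_one hr.1]
  linarith [h.sub_two_mul_pos hr]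

lemma gfun_pos (h : IsSmallStar C R m ρ) {r : ℝ} (hr : r ∈ Ioc 0 R) : 0 < gfun m ρ r := by
  have hρ := h.one_le_density hr
  have := sqrt_pos.2 (h.one_sub_two_mul_div_pos hr)
  have := sqrt_pos.2 (show 0 < 2 * ρ r - 1 by linarith)
  have := hr.1
  unfold gfun
  positivity

lemma le_three_mul_sq_mul_gfun (h : IsSmallStar C R m ρ) {r : ℝ} (hr : r ∈ Ioc 0 R)
    (hsmall : 16 * π * (1 + C * R ^ 2) * r ^ 2 ≤ 3) :
    3 / (4 * π) * (√(1 / 2) / √(1 + 2 * C * R ^ 2)) ≤ 3 * r ^ 2 * gfun m ρ r := by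
  obtain ⟨hρ1, hρC, -⟩ := h.2.2.2.2.2.2 r hr
  have hρ : 0 < √(2 * ρ r - 1) := sqrt_pos.2 (by linarith)
  have : 3 * r ^ 2 * gfun m ρ r = 3 / (4 * π) * (√(1 - 2 * m r / r) / √(2 * ρ r - 1)) := by
    have := hr.1.ne'
    unfold gfun
    field_simp
  rw [this]
  gcongr
  · exact h.half_le_one_sub_two_mul_div hr hsmall
  · linarith

lemma differentiableAt_gfun (h : IsSmallStar C R m ρ) {r : ℝ} (hr : r ∈ Ioo 0 R) :
    DifferentiableAt ℝ (gfun m ρ) r := by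
  have hm := (h.hasDerivAt_mass hr).differentiableAt
  have hρ := (h.hasDerivAt_density hr).differentiableAt
  have hw := (h.one_sub_two_mul_div_pos (Ioo_subset_Ioc_self hr)).ne'
  have hρ1 := h.one_le_density (Ioo_subset_Ioc_self hr)
  have hρ2 : 2 * ρ r - 1 ≠ 0 := by linarith
  have hρ' : √(2 * ρ r - 1) ≠ 0 := (sqrt_pos.2 (by linarith)).ne'
  have hr0 := hr.1.ne'
  have hπ := pi_pos.ne'
  unfold gfun
  fun_prop (disch := first | assumption | simp [*])

lemma differentiableAt_dpsi0_radial (h : IsSmallStar C R m ρ) {r : ℝ} (hr : r ∈ Ioo 0 R) :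
    DifferentiableAt ℝ (fun r => (m r / r ^ 2 + 4 * π * r * (ρ r - 1)) /
      (1 - 2 * m r / r) * gfun m ρ r) r := by
  have hm := (h.hasDerivAt_mass hr).differentiableAt
  have hρ := (h.hasDerivAt_density hr).differentiableAt
  have hw := (h.one_sub_two_mul_div_pos (Ioo_subset_Ioc_self hr)).ne'
  have hr0 := hr.1.ne'
  have hg := h.differentiableAt_gfun hr
  fun_prop (disch := first | assumption | simp [*])

end IsSmallStar

lemma differentiableAt_section_of_contDiffOn {f : ℝ → ℝ → ℝ} {s : Set ℝ}
    (hf : ContDiffOn ℝ 2 (fun p : ℝ × ℝ => f p.1 p.2) (univ ×ˢ s)) (φ : ℝ) {χ : ℝ}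
    (hχ : s ∈ 𝓝 χ) : DifferentiableAt ℝ (f φ) χ ∧ DifferentiableAt ℝ (deriv (f φ)) χ := by
  have hfφ : ContDiffOn ℝ 2 (f φ) (interior s) :=
    hf.comp (contDiff_const.prodMk contDiff_id).contDiffOn
      fun x hx => ⟨mem_univ φ, interior_subset hx⟩
  have hχ' : interior s ∈ 𝓝 χ := isOpen_interior.mem_nhds (mem_interior_iff_mem_nhds.2 hχ)
  exact ⟨(hfφ.contDiffAt hχ').differentiableAt two_ne_zero,
    ((hfφ.deriv_of_isOpen isOpen_interior le_rfl).contDiffAt hχ').differentiableAt one_ne_zero⟩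

namespace IsComoving

variable {C R B : ℝ} {m ρ r₀ : ℝ → ℝ}

lemma monotoneOn (hc : IsComoving R B m ρ r₀) : MonotoneOn r₀ (Icc 0 B) := by
  obtain ⟨-, -, -, hcont, -, hder⟩ := hc
  refine monotoneOn_of_hasDerivWithinAt_nonneg (convex_Icc 0 B) hcont (fun x hx => ?_)
    (fun x _ => gfun_nonneg m ρ (r₀ x))
  rw [interior_Icc] at hx ⊢
  exact (hder x (Ioo_subset_Ioc_self hx)).hasDerivWithinAt

lemma lt_radius (hc : IsComoving R B m ρ r₀) (h : IsSmallStar C R m ρ) {χ : ℝ}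
    (hχ : χ ∈ Ioo 0 B) : r₀ χ < R := by
  obtain ⟨-, -, -, -, hmaps, hder⟩ := hc
  refine (hmaps χ (Ioo_subset_Icc_self hχ)).2.lt_of_ne fun hR => ?_
  have hg := h.gfun_pos ⟨h.1, le_rfl⟩
  have hslope : ∀ᶠ z in 𝓝[>] χ, 0 < slope r₀ χ z :=
    ((hasDerivWithinAt_iff_tendsto_slope' (lt_irrefl χ)).1
      (hR ▸ hder χ (Ioo_subset_Ioc_self hχ)).hasDerivWithinAt).eventually (lt_mem_nhds hg)
  obtain ⟨z, hz, hzB⟩ := (hslope.and (Ioo_mem_nhdsGT hχ.2)).exists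
  rw [slope_def_field, hR, div_pos_iff_of_pos_right (sub_pos.2 hzB.1)] at hz
  linarith [(hmaps z ⟨hχ.1.le.trans hzB.1.le, hzB.2.le⟩).2]

lemma cube_growth (hc : IsComoving R B m ρ r₀) (h : IsSmallStar C R m ρ) {a x : ℝ}
    (ha : 0 < a) (hax : a ≤ x) (hxB : x ≤ B) (hpos : ∀ y ∈ Ioo a x, 0 < r₀ y)
    (hsmall : 16 * π * (1 + C * R ^ 2) * r₀ x ^ 2 ≤ 3) :
    3 / (4 * π) * (√(1 / 2) / √(1 + 2 * C * R ^ 2)) * (x - a) ≤ r₀ x ^ 3 - r₀ a ^ 3 := by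
  have hmono := hc.monotoneOn
  obtain ⟨-, -, -, hcont, hmaps, hder⟩ := hc
  set c := 3 / (4 * π) * (√(1 / 2) / √(1 + 2 * C * R ^ 2))
  have hk : 0 < 16 * π * (1 + C * R ^ 2) := by have := h.one_le_one_add; have := pi_pos; positivity
  have hgrowth : MonotoneOn (fun y => r₀ y ^ 3 - c * y) (Icc a x) := by
    refine monotoneOn_of_hasDerivWithinAt_nonneg (convex_Icc a x)
      (f' := fun y => 3 * r₀ y ^ 2 * gfun m ρ (r₀ y) - c)
      ((hcont.mono (Icc_subset_Icc ha.le hxB)).pow 3 |>.sub (by fun_prop))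
      (fun y hy => ?_) (fun y hy => ?_) <;> rw [interior_Icc] at hy
    · have := ((hder y ⟨ha.trans hy.1, hy.2.le.trans hxB⟩).fun_pow 3).fun_sub
        ((hasDerivAt_id y).const_mul c)
      simpa using this.hasDerivWithinAt
    · have hy0 := hpos y hy
      have hry : r₀ y ≤ r₀ x :=
        hmono ⟨ha.le.trans hy.1.le, hy.2.le.trans hxB⟩ ⟨ha.le.trans hax, hxB⟩ hy.2.le
      have := h.le_three_mul_sq_mul_gfun (r := r₀ y)
        ⟨hy0, (hmaps y ⟨ha.le.trans hy.1.le, hy.2.le.trans hxB⟩).2⟩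
        ((mul_le_mul_of_nonneg_left (pow_le_pow_left₀ hy0.le hry 2) hk.le).trans hsmall)
      linarith
  have := hgrowth (left_mem_Icc.2 hax) (right_mem_Icc.2 hax) hax
  simp only at this
  linarith

lemma pos (hc : IsComoving R B m ρ r₀) (h : IsSmallStar C R m ρ) {χ : ℝ} (hχ : χ ∈ Ioo 0 B) :
    0 < r₀ χ := by
  obtain ⟨-, -, hBR, hcont, hmaps, hder⟩ := id hc
  refine (hmaps χ (Ioo_subset_Icc_self hχ)).1.lt_of_ne fun hχ0 => ?_
  have hZ : IsCompact (Icc 0 B ∩ r₀ ⁻¹' {0}) :=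
    isCompact_Icc.of_isClosed_subset
      (hcont.preimage_isClosed_of_isClosed isClosed_Icc isClosed_singleton) inter_subset_left
  obtain ⟨χ₀, ⟨hχ₀, hr₀χ₀⟩, hlast⟩ := hZ.exists_isGreatest ⟨χ, Ioo_subset_Icc_self hχ, hχ0.symm⟩
  have hr₀χ₀ : r₀ χ₀ = 0 := hr₀χ₀
  have hχ₀0 : 0 < χ₀ := hχ.1.trans_le (hlast ⟨Ioo_subset_Icc_self hχ, hχ0.symm⟩)
  have hχ₀B : χ₀ < B := hχ₀.2.lt_of_ne fun hB => h.1.ne' (hBR ▸ hB ▸ hr₀χ₀)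
  have hder₀ : HasDerivAt r₀ 0 χ₀ := by
    simpa [hr₀χ₀, gfun] using hder χ₀ ⟨hχ₀0, hχ₀.2⟩
  set c := 3 / (4 * π) * (√(1 / 2) / √(1 + 2 * C * R ^ 2))
  have hc0 : 0 < c := by
    have := h.one_le_one_add
    have := sqrt_pos.2 (show 0 < 1 + 2 * C * R ^ 2 by linarith)
    have := pi_pos
    positivity
  have hslope : ∀ᶠ x in 𝓝[>] χ₀, slope (fun y => r₀ y ^ 3) χ₀ x < c := by
    refine HasDerivWithinAt.limsup_slope_le' ?_ (lt_irrefl χ₀) hc0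
    simpa using (hder₀.fun_pow 3).hasDerivWithinAt
  have hsmall : ∀ᶠ x in 𝓝[>] χ₀, 16 * π * (1 + C * R ^ 2) * r₀ x ^ 2 < 3 := by
    refine eventually_nhdsWithin_of_eventually_nhds ?_
    refine ((hder₀.continuousAt.pow 2).const_mul _).eventually (gt_mem_nhds ?_)
    simp [hr₀χ₀]
  obtain ⟨x, ⟨hx, hkx⟩, hxB⟩ := ((hslope.and hsmall).and (Ioo_mem_nhdsGT hχ₀B)).exists
  have hr₀pos : ∀ y ∈ Ioo χ₀ x, 0 < r₀ y := fun y hy =>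
    (hmaps y ⟨hχ₀0.le.trans hy.1.le, hy.2.le.trans hxB.2.le⟩).1.lt_of_ne fun hy0 =>
      (hlast ⟨⟨hχ₀0.le.trans hy.1.le, hy.2.le.trans hxB.2.le⟩, hy0.symm⟩).not_gt hy.1
  have := hc.cube_growth h hχ₀0 hxB.1.le hxB.2.le hr₀pos hkx.le
  rw [slope_def_field, div_lt_iff₀ (sub_pos.2 hxB.1)] at hx
  simp only [hr₀χ₀] at this hx
  linarith

lemma mem_Ioo (hc : IsComoving R B m ρ r₀) (h : IsSmallStar C R m ρ) {χ : ℝ}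
    (hχ : χ ∈ Ioo 0 B) : r₀ χ ∈ Ioo 0 R :=
  ⟨hc.pos h hχ, hc.lt_radius h hχ⟩

lemma differentiableAt_coefficients (hc : IsComoving R B m ρ r₀) (h : IsSmallStar C R m ρ)
    {χ : ℝ} (hχ : χ ∈ Ioo 0 B) :
    DifferentiableAt ℝ (fun x => gfun m ρ (r₀ x)) χ ∧
      DifferentiableAt ℝ (fun x => 2 / r₀ x - dpsi0 m ρ r₀ x / gfun m ρ (r₀ x)) χ := by
  have hr := hc.mem_Ioo h hχ
  have hr₀ := (hc.2.2.2.2.2 χ (Ioo_subset_Ioc_self hχ)).differentiableAt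
  have hg := (h.differentiableAt_gfun hr).comp χ hr₀
  have hd : DifferentiableAt ℝ (dpsi0 m ρ r₀) χ :=
    (h.differentiableAt_dpsi0_radial hr).comp χ hr₀
  exact ⟨hg, ((differentiableAt_const 2).div hr₀ hr.1.ne').sub
    (hd.div hg (h.gfun_pos (Ioo_subset_Ioc_self hr)).ne')⟩

lemma deriv_eq_add_of_eqOn (hc : IsComoving R B m ρ r₀) (h : IsSmallStar C R m ρ)
    {r₁ : ℝ → ℝ → ℝ} (hreg : ContDiffOn ℝ 2 (fun p : ℝ × ℝ => r₁ p.1 p.2) (univ ×ˢ Icc 0 B))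
    {f : ℝ → ℝ} {φ χ : ℝ} (hχ : χ ∈ Ioo 0 B)
    (hf : EqOn f (fun x => (2 / r₀ x - dpsi0 m ρ r₀ x / gfun m ρ (r₀ x)) * r₁ φ x
      + Dchi r₁ φ x / gfun m ρ (r₀ x)) (Ioo 0 B)) :
    deriv f χ = deriv (fun x => (2 / r₀ x - dpsi0 m ρ r₀ x / gfun m ρ (r₀ x)) * r₁ φ x) χ
      + deriv (fun x => Dchi r₁ φ x / gfun m ρ (r₀ x)) χ := by
  obtain ⟨hg, hA⟩ := hc.differentiableAt_coefficients h hχ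
  obtain ⟨hr₁, hDr₁⟩ := differentiableAt_section_of_contDiffOn hreg φ (Icc_mem_nhds hχ.1 hχ.2)
  rw [(eventuallyEq_of_mem (isOpen_Ioo.mem_nhds hχ) hf).deriv_eq]
  exact deriv_add (hA.mul hr₁)
    (hDr₁.div hg (h.gfun_pos (Ioo_subset_Ioc_self (hc.mem_Ioo h hχ))).ne')

end IsComoving

lemma dpsi0_div_gfun {m ρ r₀ : ℝ → ℝ} {χ : ℝ} (hg : gfun m ρ (r₀ χ) ≠ 0) :
    dpsi0 m ρ r₀ χ / gfun m ρ (r₀ χ) =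
      (m (r₀ χ) / r₀ χ ^ 2 + 4 * π * r₀ χ * (ρ (r₀ χ) - 1)) / (1 - 2 * m (r₀ χ) / r₀ χ) :=
  mul_div_cancel_right₀ _ hg

lemma omega_eq_of_mass_eq {m ρ r₀ : ℝ → ℝ} {χ r₁ ω₁ m₁ D : ℝ} (hr : r₀ χ ≠ 0)
    (hw : r₀ χ - 2 * m (r₀ χ) ≠ 0) (hg : gfun m ρ (r₀ χ) ≠ 0)
    (h₃ : m₁ = -(4 * π) * r₀ χ ^ 2 * (ρ (r₀ χ) - 1) * r₁)
    (h₄ : -m₁ / r₀ χ + m (r₀ χ) / r₀ χ ^ 2 * r₁ =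
      -(1 - 2 * m (r₀ χ) / r₀ χ) * ω₁ + (1 - 2 * m (r₀ χ) / r₀ χ) * (D / gfun m ρ (r₀ χ))) :
    ω₁ = D / gfun m ρ (r₀ χ) - dpsi0 m ρ r₀ χ / gfun m ρ (r₀ χ) * r₁ := by
  have hK : -m₁ / r₀ χ + m (r₀ χ) / r₀ χ ^ 2 * r₁ =
      (m (r₀ χ) / r₀ χ ^ 2 + 4 * π * r₀ χ * (ρ (r₀ χ) - 1)) * r₁ := by
    rw [h₃]; field_simp; ring
  rw [hK] at h₄
  rw [dpsi0_div_gfun hg, div_mul_eq_mul_div, h₄]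
  field_simp
  ring

theorem stmt11_general (Cs R B : ℝ) (m ρ r₀ : ℝ → ℝ)
    (hstar : IsSmallStar Cs R m ρ) (hcom : IsComoving R B m ρ r₀)
    (r₁ ρ₁ ψ₁ ω₁ m₁ : ℝ → ℝ → ℝ)
    (hreg₁ : ContDiffOn ℝ 2 (fun p : ℝ × ℝ => r₁ p.1 p.2) (univ ×ˢ Icc 0 B))
    -- (i) linearised equation of state ρ₁ = −(2ρ₀−1)ψ₁
    (heq₁ : ∀ φ : ℝ, ∀ χ ∈ Ioo (0:ℝ) B, ρ₁ φ χ = -(2 * ρ (r₀ χ) - 1) * ψ₁ φ χ)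
    -- (ii) linearised conservation law (2/r₀)r₁ − ψ₁ + ω₁ = 0
    (heq₂ : ∀ φ : ℝ, ∀ χ ∈ Ioo (0:ℝ) B,
      2 / r₀ χ * r₁ φ χ - ψ₁ φ χ + ω₁ φ χ = 0)
    -- (iii) first variation of the mass m₁ = −4πr₀²(ρ₀−1)r₁
    (heq₃ : ∀ φ : ℝ, ∀ χ ∈ Ioo (0:ℝ) B,
      m₁ φ χ = -(4 * π) * r₀ χ ^ 2 * (ρ (r₀ χ) - 1) * r₁ φ χ)
    -- (iv) linearised mass equation
    (heq₄ : ∀ φ : ℝ, ∀ χ ∈ Ioo (0:ℝ) B,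
      -(m₁ φ χ) / r₀ χ + m (r₀ χ) / r₀ χ ^ 2 * r₁ φ χ =
        -(1 - 2 * m (r₀ χ) / r₀ χ) * ω₁ φ χ
          + (1 - 2 * m (r₀ χ) / r₀ χ) * (Dchi r₁ φ χ / gfun m ρ (r₀ χ)))
    -- (v) linearised Hessian equation
    (heq₅ : ∀ φ : ℝ, ∀ χ ∈ Ioo (0:ℝ) B,
      (2 * ρ (r₀ χ) - 1) * Dphi (Dphi r₁) φ χ
        + (2 * ω₁ φ χ - Dchi ψ₁ φ χ / dpsi0 m ρ r₀ χ
            - Dchi r₁ φ χ / gfun m ρ (r₀ χ)) *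
          (m (r₀ χ) / r₀ χ ^ 2 + 4 * π * r₀ χ * (ρ (r₀ χ) - 1)) =
        -(m₁ φ χ) / r₀ χ ^ 2 + 2 * (m (r₀ χ) / r₀ χ ^ 3) * r₁ φ χ
          - 4 * π * (ρ (r₀ χ) - 1) * r₁ φ χ - 4 * π * r₀ χ * ρ₁ φ χ) :
    ∀ φ : ℝ, ∀ χ ∈ Ioo (0:ℝ) B,
      ψ₁ φ χ = (2 / r₀ χ - dpsi0 m ρ r₀ χ / gfun m ρ (r₀ χ)) * r₁ φ χ
          + Dchi r₁ φ χ / gfun m ρ (r₀ χ) ∧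
      ω₁ φ χ = Dchi r₁ φ χ / gfun m ρ (r₀ χ)
          - dpsi0 m ρ r₀ χ / gfun m ρ (r₀ χ) * r₁ φ χ ∧
      MasterEq m ρ r₀ r₁ φ χ := by
  intro φ
  have hω : ∀ χ ∈ Ioo (0:ℝ) B, ω₁ φ χ = Dchi r₁ φ χ / gfun m ρ (r₀ χ)
      - dpsi0 m ρ r₀ χ / gfun m ρ (r₀ χ) * r₁ φ χ := fun χ hχ => by
    have hr := Ioo_subset_Ioc_self (hcom.mem_Ioo hstar hχ)
    exact omega_eq_of_mass_eq hr.1.ne' (hstar.sub_two_mul_pos hr).ne' (hstar.gfun_pos hr).ne'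
      (heq₃ φ χ hχ) (heq₄ φ χ hχ)
  have hψ : ∀ χ ∈ Ioo (0:ℝ) B, ψ₁ φ χ = (2 / r₀ χ - dpsi0 m ρ r₀ χ / gfun m ρ (r₀ χ)) * r₁ φ χ
      + Dchi r₁ φ χ / gfun m ρ (r₀ χ) := fun χ hχ => by
    linear_combination hω χ hχ - heq₂ φ χ hχ
  intro χ hχ
  refine ⟨hψ χ hχ, hω χ hχ, ?_⟩
  have hr := hcom.mem_Ioo hstar hχ
  have hDψ : Dchi ψ₁ φ χ = _ := hcom.deriv_eq_add_of_eqOn hstar hreg₁ hχ hψ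
  have hm₁ : -m₁ φ χ / r₀ χ ^ 2 = 4 * π * (ρ (r₀ χ) - 1) * r₁ φ χ := by
    rw [heq₃ φ χ hχ]
    field_simp [hr.1.ne']
  have h₅ := heq₅ φ χ hχ
  rw [hDψ, hω χ hχ, heq₁ φ χ hχ, hψ χ hχ, hm₁] at h₅
  unfold MasterEq
  linear_combination h₅

/-- Reduction of the linearised Einstein–Euler system around a small hard star to a
decoupled master wave equation for the linearised radius `r₁`, together with explicit
formulas for `ψ₁` and `ω₁`. -/
theorem stmt11 (Cs R B : ℝ) (hCs : 0 < Cs) (m ρ r₀ : ℝ → ℝ)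
    (hstar : IsSmallStar Cs R m ρ) (hcom : IsComoving R B m ρ r₀)
    (r₁ ρ₁ ψ₁ ω₁ m₁ : ℝ → ℝ → ℝ)
    (hreg₁ : ContDiffOn ℝ 2 (fun p : ℝ × ℝ => r₁ p.1 p.2) (univ ×ˢ Icc 0 B))
    (hreg₂ : ContDiffOn ℝ 2 (fun p : ℝ × ℝ => ρ₁ p.1 p.2) (univ ×ˢ Icc 0 B))
    (hreg₃ : ContDiffOn ℝ 2 (fun p : ℝ × ℝ => ψ₁ p.1 p.2) (univ ×ˢ Icc 0 B))
    (hreg₄ : ContDiffOn ℝ 2 (fun p : ℝ × ℝ => ω₁ p.1 p.2) (univ ×ˢ Icc 0 B))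
    (hreg₅ : ContDiffOn ℝ 2 (fun p : ℝ × ℝ => m₁ p.1 p.2) (univ ×ˢ Icc 0 B))
    -- (i) linearised equation of state ρ₁ = −(2ρ₀−1)ψ₁
    (heq₁ : ∀ φ : ℝ, ∀ χ ∈ Ioo (0:ℝ) B, ρ₁ φ χ = -(2 * ρ (r₀ χ) - 1) * ψ₁ φ χ)
    -- (ii) linearised conservation law (2/r₀)r₁ − ψ₁ + ω₁ = 0
    (heq₂ : ∀ φ : ℝ, ∀ χ ∈ Ioo (0:ℝ) B,
      2 / r₀ χ * r₁ φ χ - ψ₁ φ χ + ω₁ φ χ = 0)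
    -- (iii) first variation of the mass m₁ = −4πr₀²(ρ₀−1)r₁
    (heq₃ : ∀ φ : ℝ, ∀ χ ∈ Ioo (0:ℝ) B,
      m₁ φ χ = -(4 * π) * r₀ χ ^ 2 * (ρ (r₀ χ) - 1) * r₁ φ χ)
    -- (iv) linearised mass equation
    (heq₄ : ∀ φ : ℝ, ∀ χ ∈ Ioo (0:ℝ) B,
      -(m₁ φ χ) / r₀ χ + m (r₀ χ) / r₀ χ ^ 2 * r₁ φ χ =
        -(1 - 2 * m (r₀ χ) / r₀ χ) * ω₁ φ χ
          + (1 - 2 * m (r₀ χ) / r₀ χ) * (Dchi r₁ φ χ / gfun m ρ (r₀ χ)))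
    -- (v) linearised Hessian equation
    (heq₅ : ∀ φ : ℝ, ∀ χ ∈ Ioo (0:ℝ) B,
      (2 * ρ (r₀ χ) - 1) * Dphi (Dphi r₁) φ χ
        + (2 * ω₁ φ χ - Dchi ψ₁ φ χ / dpsi0 m ρ r₀ χ
            - Dchi r₁ φ χ / gfun m ρ (r₀ χ)) *
          (m (r₀ χ) / r₀ χ ^ 2 + 4 * π * r₀ χ * (ρ (r₀ χ) - 1)) =
        -(m₁ φ χ) / r₀ χ ^ 2 + 2 * (m (r₀ χ) / r₀ χ ^ 3) * r₁ φ χ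
          - 4 * π * (ρ (r₀ χ) - 1) * r₁ φ χ - 4 * π * r₀ χ * ρ₁ φ χ) :
    ∀ φ : ℝ, ∀ χ ∈ Ioo (0:ℝ) B,
      ψ₁ φ χ = (2 / r₀ χ - dpsi0 m ρ r₀ χ / gfun m ρ (r₀ χ)) * r₁ φ χ
          + Dchi r₁ φ χ / gfun m ρ (r₀ χ) ∧
      ω₁ φ χ = Dchi r₁ φ χ / gfun m ρ (r₀ χ)
          - dpsi0 m ρ r₀ χ / gfun m ρ (r₀ χ) * r₁ φ χ ∧
      MasterEq m ρ r₀ r₁ φ χ :=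
  stmt11_general Cs R B m ρ r₀ hstar hcom r₁ ρ₁ ψ₁ ω₁ m₁ hreg₁ heq₁ heq₂ heq₃ heq₄ heq₅
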